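/- Let X be a real D₁ × D₂ matrix and d₁ ≤ D₁. Suppose B⋆ ∈ {±1}^{D₂ × d₁} maximizes B ↦ ‖XB‖₊ over all sign matrices in {±1}^{D₂ × d₁}, and suppose U⋆ is a real D₁ × d₁ matrix with orthonormal columns (U⋆ᵀU⋆ = I_{d₁}) maximizing U ↦ Tr(UᵀXB⋆) over all D₁ × d₁ matrices U with orthonormal columns. Then U⋆ maximizes U ↦ ‖UᵀX‖₁ over all D₁ × d₁ matrices with orthonormal columns, and ‖U⋆ᵀX‖₁ = Tr(U⋆ᵀXB⋆) = ‖XB⋆‖₊. -/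

import Mathlib

open Matrix BigOperators

/-- Entrywise L1 norm of a real matrix. -/
noncomputable def l1Norm {m n : ℕ} (M : Matrix (Fin m) (Fin n) ℝ) : ℝ :=
  ∑ i, ∑ j, |M i j|

/-- Nuclear norm of a real matrix: trace of the unique positive semidefinite
square root of the Gram matrix `Aᵀ * A`. -/
noncomputable def nuclearNorm {D d : ℕ} (A : Matrix (Fin D) (Fin d) ℝ) : ℝ :=
  (have hA : (Aᵀ * A).PosSemidef := by
      simpa using Matrix.posSemidef_conjTranspose_mul_self A
    (hA.1.eigenvectorUnitary : Matrix (Fin d) (Fin d) ℝ) *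
      diagonal (Real.sqrt ∘ hA.1.eigenvalues) *
      (star hA.1.eigenvectorUnitary : Matrix (Fin d) (Fin d) ℝ)).trace

/-
The key fact is a variational formula for the nuclear norm: for `V` with orthonormal columns,
`tr (Vᵀ A) ≤ ‖A‖₊`, with equality for some such `V` as soon as `A` has no more columns than rows.
Rotating `A` by an orthogonal eigenbasis `P` of `Aᵀ A` makes the columns of `A P` pairwise
orthogonal with norms the singular values, and `tr (Vᵀ A) = tr ((V P)ᵀ (A P))`; Cauchy–Schwarz
column by column gives the bound, and the normalised columns of `A P` attain it. Dually,
`tr (Y B) ≤ ‖Y‖₁` for a sign matrix `B`, with equality for the sign pattern of `Yᵀ`. Hence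
`‖Vᵀ X‖₁ = max_B tr (Vᵀ X B) ≤ max_B ‖X B‖₊ = ‖X B⋆‖₊ = tr (U⋆ᵀ X B⋆) ≤ ‖U⋆ᵀ X‖₁`.
-/

open Module
open scoped InnerProductSpace

theorem exists_orthonormal_eq_norm_smul {E ι : Type*} [NormedAddCommGroup E]
    [InnerProductSpace ℝ E] [FiniteDimensional ℝ E] [Fintype ι]
    (hcard : Fintype.card ι ≤ finrank ℝ E) {m : ι → E}
    (hm : Pairwise fun i j => ⟪m i, m j⟫_ℝ = 0) :
    ∃ e : ι → E, Orthonormal ℝ e ∧ ∀ i, m i = ‖m i‖ • e i := by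
  -- pad `ι` to an index type of cardinality `finrank ℝ E`, so that the normalised nonzero
  -- `m i` extend to an orthonormal basis indexed by it
  let u : ι ⊕ Fin (finrank ℝ E - Fintype.card ι) → E := Sum.elim (fun i => ‖m i‖⁻¹ • m i) 0
  let s : Set (ι ⊕ Fin (finrank ℝ E - Fintype.card ι)) := Sum.inl '' {i | m i ≠ 0}
  have hu : Orthonormal ℝ (s.domRestrict u) := by
    refine ⟨?_, ?_⟩
    · rintro ⟨_, i, hi, rfl⟩
      exact norm_smul_inv_norm (𝕜 := ℝ) hi
    · rintro ⟨_, i, hi, rfl⟩ ⟨_, j, hj, rfl⟩ hne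
      have hij : i ≠ j := by
        rintro rfl; exact hne rfl
      simp [u, real_inner_smul_left, real_inner_smul_right, hm hij]
  obtain ⟨b, hb⟩ := hu.exists_orthonormalBasis_extension_of_card_eq (by simp; omega)
  refine ⟨b ∘ Sum.inl, b.orthonormal.comp _ Sum.inl_injective, fun i => ?_⟩
  by_cases hi : m i = 0
  · simp [hi]
  · rw [Function.comp_apply, hb _ (Set.mem_image_of_mem _ hi)]
    simp [u, smul_smul, hi]

namespace Matrix

variable {m n : Type*} [Fintype m]

def euclideanCol (M : Matrix m n ℝ) (j : n) : EuclideanSpace ℝ m :=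
  WithLp.toLp 2 (Mᵀ j)

theorem inner_euclideanCol (M N : Matrix m n ℝ) (i j : n) :
    ⟪M.euclideanCol i, N.euclideanCol j⟫_ℝ = (Mᵀ * N) i j := by
  simp [euclideanCol, EuclideanSpace.inner_toLp_toLp, mul_apply, dotProduct, mul_comm]

theorem orthonormal_euclideanCol_iff [DecidableEq n] (V : Matrix m n ℝ) :
    Orthonormal ℝ V.euclideanCol ↔ Vᵀ * V = 1 := by
  simp only [orthonormal_iff_ite, inner_euclideanCol, ← Matrix.ext_iff, one_apply]

theorem trace_transpose_mul_eq_sum_inner [Fintype n] (V M : Matrix m n ℝ) :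
    (Vᵀ * M).trace = ∑ i, ⟪V.euclideanCol i, M.euclideanCol i⟫_ℝ := by
  simp [trace, inner_euclideanCol]

variable {R : Type*} [Fintype n] [DecidableEq n] [CommRing R]

theorem trace_transpose_mul_mul_of_mul_transpose_eq_one {V A : Matrix m n R} {Q : Matrix n n R}
    (hQ : Q * Qᵀ = 1) : ((V * Q)ᵀ * (A * Q)).trace = (Vᵀ * A).trace := by
  rw [transpose_mul, Matrix.mul_assoc, trace_mul_comm, Matrix.mul_assoc, Matrix.mul_assoc, hQ,
    Matrix.mul_one]

theorem transpose_mul_self_mul_eq_one {V : Matrix m n R} {Q : Matrix n n R}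
    (hV : Vᵀ * V = 1) (hQ : Qᵀ * Q = 1) : (V * Q)ᵀ * (V * Q) = 1 := by
  rw [transpose_mul, Matrix.mul_assoc, ← Matrix.mul_assoc Vᵀ, hV, Matrix.one_mul, hQ]

end Matrix

section Gram

variable {D d : ℕ} (A : Matrix (Fin D) (Fin d) ℝ)

theorem posSemidef_transpose_mul_self : (Aᵀ * A).PosSemidef := by
  simpa using posSemidef_conjTranspose_mul_self A

noncomputable def gramEigenbasis : Matrix (Fin d) (Fin d) ℝ :=
  (posSemidef_transpose_mul_self A).1.eigenvectorUnitary

theorem gramEigenbasis_mul_transpose : gramEigenbasis A * (gramEigenbasis A)ᵀ = 1 :=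
  mem_unitaryGroup_iff.mp (posSemidef_transpose_mul_self A).1.eigenvectorUnitary.2

theorem transpose_mul_gramEigenbasis : (gramEigenbasis A)ᵀ * gramEigenbasis A = 1 :=
  mem_unitaryGroup_iff'.mp (posSemidef_transpose_mul_self A).1.eigenvectorUnitary.2

theorem gram_mul_gramEigenbasis :
    (A * gramEigenbasis A)ᵀ * (A * gramEigenbasis A) =
      diagonal (posSemidef_transpose_mul_self A).1.eigenvalues := by
  have h := (posSemidef_transpose_mul_self A).1.conjStarAlgAut_star_eigenvectorUnitary
  simp only [Unitary.conjStarAlgAut_apply, Unitary.coe_star, star_eq_conjTranspose,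
    conjTranspose_eq_transpose_of_trivial] at h
  simpa [gramEigenbasis, ← Matrix.mul_assoc] using h

theorem nuclearNorm_eq_sum_norm_euclideanCol :
    nuclearNorm A = ∑ i, ‖(A * gramEigenbasis A).euclideanCol i‖ := by
  have hA := posSemidef_transpose_mul_self A
  have hnorm : ∀ i, ‖(A * gramEigenbasis A).euclideanCol i‖ = √(hA.1.eigenvalues i) := by
    intro i
    rw [norm_eq_sqrt_real_inner, inner_euclideanCol, gram_mul_gramEigenbasis, diagonal_apply_eq]
  simp only [hnorm]
  change (gramEigenbasis A * diagonal (Real.sqrt ∘ hA.1.eigenvalues) *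
    (gramEigenbasis A)ᵀ).trace = _
  rw [trace_mul_cycle, transpose_mul_gramEigenbasis, Matrix.one_mul, trace_diagonal]
  rfl

end Gram

section VonNeumann

variable {D d : ℕ}

theorem trace_transpose_mul_le_nuclearNorm {V : Matrix (Fin D) (Fin d) ℝ} (hV : Vᵀ * V = 1)
    (A : Matrix (Fin D) (Fin d) ℝ) : (Vᵀ * A).trace ≤ nuclearNorm A := by
  set P := gramEigenbasis A
  have hVP : Orthonormal ℝ (V * P).euclideanCol := (orthonormal_euclideanCol_iff _).mpr
    (transpose_mul_self_mul_eq_one hV (transpose_mul_gramEigenbasis A))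
  rw [← trace_transpose_mul_mul_of_mul_transpose_eq_one (gramEigenbasis_mul_transpose A),
    trace_transpose_mul_eq_sum_inner, nuclearNorm_eq_sum_norm_euclideanCol]
  gcongr with i
  simpa [hVP.1 i] using real_inner_le_norm ((V * P).euclideanCol i) ((A * P).euclideanCol i)

theorem exists_trace_transpose_mul_eq_nuclearNorm (hd : d ≤ D) (A : Matrix (Fin D) (Fin d) ℝ) :
    ∃ V : Matrix (Fin D) (Fin d) ℝ, Vᵀ * V = 1 ∧ (Vᵀ * A).trace = nuclearNorm A := by
  set P := gramEigenbasis A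
  have horth : Pairwise fun i j => ⟪(A * P).euclideanCol i, (A * P).euclideanCol j⟫_ℝ = 0 := by
    intro i j hij
    rw [inner_euclideanCol, gram_mul_gramEigenbasis, diagonal_apply_ne _ hij]
  obtain ⟨e, he, hAe⟩ := exists_orthonormal_eq_norm_smul (by simpa using hd) horth
  let W : Matrix (Fin D) (Fin d) ℝ := of fun k i => e i k
  have hW : W.euclideanCol = e := rfl
  refine ⟨W * Pᵀ, ?_, ?_⟩
  · exact transpose_mul_self_mul_eq_one ((orthonormal_euclideanCol_iff W).mp he)
      (by rw [transpose_transpose, gramEigenbasis_mul_transpose])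
  · rw [← trace_transpose_mul_mul_of_mul_transpose_eq_one (gramEigenbasis_mul_transpose A),
      Matrix.mul_assoc, transpose_mul_gramEigenbasis, Matrix.mul_one,
      trace_transpose_mul_eq_sum_inner, nuclearNorm_eq_sum_norm_euclideanCol, hW]
    refine Finset.sum_congr rfl fun i _ => ?_
    conv_lhs => rw [hAe i]
    rw [real_inner_smul_right, real_inner_self_eq_norm_sq, he.1 i, one_pow, mul_one]

end VonNeumann

def IsSignMatrix {m n : Type*} (B : Matrix m n ℝ) : Prop :=
  ∀ i j, B i j = 1 ∨ B i j = -1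

section Sign

variable {d D : ℕ}

theorem trace_mul_le_l1Norm (Y : Matrix (Fin d) (Fin D) ℝ) {B : Matrix (Fin D) (Fin d) ℝ}
    (hB : IsSignMatrix B) : (Y * B).trace ≤ l1Norm Y := by
  simp only [trace, diag, mul_apply, l1Norm]
  gcongr with i _ j
  rcases hB j i with h | h <;> simp [h, le_abs_self, neg_le_abs]

theorem exists_isSignMatrix_trace_mul_eq_l1Norm (Y : Matrix (Fin d) (Fin D) ℝ) :
    ∃ B : Matrix (Fin D) (Fin d) ℝ, IsSignMatrix B ∧ (Y * B).trace = l1Norm Y := by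
  refine ⟨of fun j i => if 0 ≤ Y i j then 1 else -1,
    fun j i => by rw [of_apply]; split_ifs <;> simp, ?_⟩
  simp only [trace, diag, mul_apply, l1Norm, of_apply]
  refine Finset.sum_congr rfl fun i _ => Finset.sum_congr rfl fun j _ => ?_
  split_ifs with h
  · rw [mul_one, abs_of_nonneg h]
  · rw [mul_neg_one, abs_of_neg (not_le.mp h)]

end Sign

theorem l1pca_solution_from_bnuc
    {D₁ D₂ d₁ : ℕ} (hd : d₁ ≤ D₁) (X : Matrix (Fin D₁) (Fin D₂) ℝ)
    (B : Matrix (Fin D₂) (Fin d₁) ℝ) (hB : ∀ i j, B i j = 1 ∨ B i j = -1)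
    (hBmax : ∀ B' : Matrix (Fin D₂) (Fin d₁) ℝ, (∀ i j, B' i j = 1 ∨ B' i j = -1) →
      nuclearNorm (X * B') ≤ nuclearNorm (X * B))
    (U : Matrix (Fin D₁) (Fin d₁) ℝ) (hU : Uᵀ * U = 1)
    (hUmax : ∀ V : Matrix (Fin D₁) (Fin d₁) ℝ, Vᵀ * V = 1 →
      (Vᵀ * X * B).trace ≤ (Uᵀ * X * B).trace) :
    (∀ V : Matrix (Fin D₁) (Fin d₁) ℝ, Vᵀ * V = 1 →
      l1Norm (Vᵀ * X) ≤ l1Norm (Uᵀ * X)) ∧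
    l1Norm (Uᵀ * X) = (Uᵀ * X * B).trace ∧
    (Uᵀ * X * B).trace = nuclearNorm (X * B) := by
  have hnuc : (Uᵀ * X * B).trace = nuclearNorm (X * B) := by
    obtain ⟨V, hV, hVtr⟩ := exists_trace_transpose_mul_eq_nuclearNorm hd (X * B)
    refine le_antisymm ?_ ?_
    · rw [Matrix.mul_assoc]
      exact trace_transpose_mul_le_nuclearNorm hU _
    · rw [← hVtr, ← Matrix.mul_assoc]
      exact hUmax V hV
  have hl1_le : ∀ V : Matrix (Fin D₁) (Fin d₁) ℝ, Vᵀ * V = 1 →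
      l1Norm (Vᵀ * X) ≤ (Uᵀ * X * B).trace := by
    intro V hV
    obtain ⟨B', hB', hB'tr⟩ := exists_isSignMatrix_trace_mul_eq_l1Norm (Vᵀ * X)
    calc l1Norm (Vᵀ * X) = (Vᵀ * (X * B')).trace := by rw [← hB'tr, Matrix.mul_assoc]
      _ ≤ nuclearNorm (X * B') := trace_transpose_mul_le_nuclearNorm hV _
      _ ≤ nuclearNorm (X * B) := hBmax B' hB'
      _ = (Uᵀ * X * B).trace := hnuc.symm
  have hl1 : l1Norm (Uᵀ * X) = (Uᵀ * X * B).trace :=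
    le_antisymm (hl1_le U hU) (trace_mul_le_l1Norm _ hB)
  exact ⟨fun V hV => hl1 ▸ hl1_le V hV, hl1, hnuc⟩
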